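/- Let n ≥ 3 be an integer and α ∈ ℝ. Suppose V : (0,∞) → ℝ is twice differentiable and satisfies, as r → 0⁺, the asymptotic expansions V(r) = 1/r + r/4 + (α/2)·r^{n−1} + o(r^{n−1}), V'(r) = −1/r² + 1/4 + ((n−1)α/2)·r^{n−2} + o(r^{n−2}), and V''(r) = 2/r³ + ((n−1)(n−2)α/2)·r^{n−3} + o(r^{n−3}); suppose E : (0,∞) → ℝ is differentiable with E(r) = O(r^{2(n−1)}) and E'(r) = O(r^{2n−3}) as r → 0⁺. Then the derivative in r of the function W(r) := r²·(V'(r)² + E(r)) − V(r)² satisfies W'(r) = −n(n−2)·α·r^{n−3} + o(r^{n−3}) as r → 0⁺. -/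

import Mathlib

/-!
Differentiating gives `W' = 2V'·(rV' + r²V'' − V) + 2rE + r²E'`. In the bracket the singular
terms `−1/r + 2/r − 1/r` and the terms `r/4 − r/4` of the three expansions cancel, leaving
`((n−1) + (n−1)(n−2) − 1)·(α/2)·r^{n−1} = n(n−2)(α/2)·r^{n−1}` up to `o(r^{n−1})`. Since
`V' = −r⁻² + O(1)`, multiplying by `2V'` yields `−n(n−2)α r^{n−3} + o(r^{n−3})`, and the `E`-terms
are `O(r^{2n−1})`.
-/

open Filter Asymptotics Topology

theorem deriv_sq_mul_sq_deriv_add_sub_sq {V E : ℝ → ℝ} {r : ℝ}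
    (hV : DifferentiableAt ℝ V r) (hV' : DifferentiableAt ℝ (deriv V) r)
    (hE : DifferentiableAt ℝ E r) :
    deriv (fun s => s ^ 2 * (deriv V s ^ 2 + E s) - V s ^ 2) r
      = 2 * deriv V r * (r * deriv V r + r ^ 2 * deriv (deriv V) r - V r)
        + (2 * r * E r + r ^ 2 * deriv E r) := by
  have h := ((hasDerivAt_pow 2 r).mul ((hV'.hasDerivAt.pow 2).add hE.hasDerivAt)).sub
    (hV.hasDerivAt.pow 2)
  refine h.deriv.trans ?_
  simp only [Pi.add_apply, Pi.pow_apply]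
  push_cast
  ring

section NearZero

variable {l : Filter ℝ}

theorem isBigO_one_of_isLittleO_sub_const_add_mul_pow (hl : l ≤ 𝓝 0) {f : ℝ → ℝ}
    {c d : ℝ} {j : ℕ} (hf : (fun r => f r - (c + d * r ^ j)) =o[l] fun r => r ^ j) :
    f =O[l] fun _ => (1 : ℝ) := by
  have hpow : (fun r : ℝ => r ^ j) =O[l] fun _ => (1 : ℝ) :=
    (((continuous_pow j).tendsto 0).mono_left hl).isBigO_one ℝ
  have hpoly : (fun r : ℝ => c + d * r ^ j) =O[l] fun _ => (1 : ℝ) :=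
    (isBigO_const_one ℝ c l).add (hpow.const_mul_left d)
  exact (hf.isBigO.trans hpow).add hpoly |>.congr_left fun r => sub_add_cancel _ _

theorem isLittleO_pow_mul_of_isBigO_pow (hl : l ≤ 𝓝 0) {f : ℝ → ℝ} {a b k : ℕ}
    (hf : f =O[l] fun r => r ^ a) (hk : k < a + b) :
    (fun r => r ^ b * f r) =o[l] fun r => r ^ k := by
  have h : (fun r => r ^ b * f r) =O[l] fun r => r ^ (a + b) :=
    ((isBigO_refl (fun r : ℝ => r ^ b) l).mul hf).congr_right fun r => by ring
  exact h.trans_isLittleO ((isLittleO_pow_pow hk).mono hl)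

end NearZero

theorem isLittleO_mul_add_sq_mul_sub {f₀ f₁ f₂ : ℝ → ℝ} {a b c : ℝ} {k : ℕ}
    (h₀ : (fun r => f₀ r - (1 / r + r / 4 + a * r ^ (k + 2))) =o[𝓝[>] 0]
      fun r => r ^ (k + 2))
    (h₁ : (fun r => f₁ r - (-1 / r ^ 2 + 1 / 4 + b * r ^ (k + 1))) =o[𝓝[>] 0]
      fun r => r ^ (k + 1))
    (h₂ : (fun r => f₂ r - (2 / r ^ 3 + c * r ^ k)) =o[𝓝[>] 0] fun r => r ^ k) :
    (fun r => r * f₁ r + r ^ 2 * f₂ r - f₀ r - (b + c - a) * r ^ (k + 2)) =o[𝓝[>] 0]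
      fun r => r ^ (k + 2) := by
  have h₁' : (fun r => r * (f₁ r - (-1 / r ^ 2 + 1 / 4 + b * r ^ (k + 1)))) =o[𝓝[>] 0]
      fun r => r ^ (k + 2) :=
    ((isBigO_refl (fun r : ℝ => r) _).mul_isLittleO h₁).congr_right fun r => by ring
  have h₂' : (fun r => r ^ 2 * (f₂ r - (2 / r ^ 3 + c * r ^ k))) =o[𝓝[>] 0]
      fun r => r ^ (k + 2) :=
    ((isBigO_refl (fun r : ℝ => r ^ 2) _).mul_isLittleO h₂).congr_right fun r => by ring
  refine ((h₁'.add h₂').sub h₀).congr' ?_ EventuallyEq.rfl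
  filter_upwards [self_mem_nhdsWithin] with r (hr : 0 < r)
  field_simp
  ring

theorem isLittleO_mul_add_mul_pow {f g : ℝ → ℝ} {c d C : ℝ} {j k : ℕ}
    (hf : (fun r => f r - (-1 / r ^ 2 + c + d * r ^ j)) =o[𝓝[>] 0] fun r => r ^ j)
    (hg : (fun r => g r - C * r ^ (k + 2)) =o[𝓝[>] 0] fun r => r ^ (k + 2)) :
    (fun r => f r * g r + C * r ^ k) =o[𝓝[>] 0] fun r => r ^ k := by
  have hpos : ∀ᶠ r : ℝ in 𝓝[>] 0, r ≠ 0 := eventually_mem_nhdsWithin.mono fun r hr => hr.ne'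
  have hbdd : (fun r => f r + 1 / r ^ 2) =O[𝓝[>] 0] fun _ => (1 : ℝ) :=
    isBigO_one_of_isLittleO_sub_const_add_mul_pow (c := c) (d := d) nhdsWithin_le_nhds
      (hf.congr_left fun r => by ring)
  have hone : (fun _ : ℝ => (1 : ℝ)) =O[𝓝[>] 0] fun r => (r ^ 2)⁻¹ := by
    refine (((((continuous_pow 2).tendsto (0 : ℝ)).mono_left nhdsWithin_le_nhds).isBigO_one
      ℝ).inv_rev ?_).congr_left fun _ => inv_one
    filter_upwards [hpos] with r hr h using absurd h (pow_ne_zero 2 hr)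
  have hf' : f =O[𝓝[>] 0] fun r => (r ^ 2)⁻¹ :=
    ((hbdd.trans hone).sub (isBigO_refl _ _)).congr_left fun r => by simp [one_div]
  have h₁ : (fun r => f r * (g r - C * r ^ (k + 2))) =o[𝓝[>] 0] fun r => r ^ k :=
    (hf'.mul_isLittleO hg).congr' EventuallyEq.rfl <| hpos.mono fun r hr => by
      field_simp; ring
  have h₂ : (fun r => C * r ^ (k + 2) * (f r + 1 / r ^ 2)) =o[𝓝[>] 0] fun r => r ^ k :=
    (((isLittleO_pow_pow (by omega : k < k + 2)).mono nhdsWithin_le_nhds).const_mul_left C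
      |>.mul_isBigO hbdd).congr_right fun r => mul_one _
  refine (h₁.add h₂).congr' (hpos.mono fun r hr => ?_) EventuallyEq.rfl
  field_simp
  ring

/-- Computation of `∂/∂r(|∇V|² − V²)` near the conformal boundary: with the
(differentiated) Fefferman–Graham-type expansions for `V`, `V'`, `V''` and the
tangential term `E = O(r^{2(n−1)})`, `E' = O(r^{2n−3})`, the function
`W(r) = r²(V'(r)² + E(r)) − V(r)²` satisfies
`W'(r) = −n(n−2)α r^{n−3} + o(r^{n−3})` as `r → 0⁺`. -/
theorem deriv_grad_potential_expansion (n : ℕ) (hn : 3 ≤ n) (α : ℝ)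
    (V : ℝ → ℝ)
    (hVdiff : ∀ r ∈ Set.Ioi (0 : ℝ), DifferentiableAt ℝ V r)
    (hVdiff' : ∀ r ∈ Set.Ioi (0 : ℝ), DifferentiableAt ℝ (deriv V) r)
    (hV : (fun r => V r - (1 / r + r / 4 + (α / 2) * r ^ (n - 1)))
      =o[nhdsWithin 0 (Set.Ioi 0)] fun r => r ^ (n - 1))
    (hV' : (fun r => deriv V r -
        (-1 / r ^ 2 + 1 / 4 + (((n : ℝ) - 1) * α / 2) * r ^ (n - 2)))
      =o[nhdsWithin 0 (Set.Ioi 0)] fun r => r ^ (n - 2))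
    (hV'' : (fun r => deriv (deriv V) r -
        (2 / r ^ 3 + (((n : ℝ) - 1) * ((n : ℝ) - 2) * α / 2) * r ^ (n - 3)))
      =o[nhdsWithin 0 (Set.Ioi 0)] fun r => r ^ (n - 3))
    (E : ℝ → ℝ)
    (hEdiff : ∀ r ∈ Set.Ioi (0 : ℝ), DifferentiableAt ℝ E r)
    (hE : E =O[nhdsWithin 0 (Set.Ioi 0)] fun r => r ^ (2 * (n - 1)))
    (hE' : deriv E =O[nhdsWithin 0 (Set.Ioi 0)] fun r => r ^ (2 * n - 3)) :
    (fun r => deriv (fun s => s ^ 2 * ((deriv V s) ^ 2 + E s) - (V s) ^ 2) r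
        - (-(n : ℝ) * ((n : ℝ) - 2) * α * r ^ (n - 3)))
      =o[nhdsWithin 0 (Set.Ioi 0)] fun r => r ^ (n - 3) := by
  obtain ⟨k, rfl⟩ : ∃ k, n = k + 3 := ⟨n - 3, by omega⟩
  rw [show k + 3 - 1 = k + 2 by omega] at hV hE
  rw [show k + 3 - 2 = k + 1 by omega] at hV'
  rw [show 2 * (k + 3) - 3 = 2 * k + 3 by omega] at hE'
  rw [show k + 3 - 3 = k by omega] at hV'' ⊢
  have hW := isLittleO_mul_add_mul_pow hV' (isLittleO_mul_add_sq_mul_sub hV hV' hV'')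
  have hE₁ :=
    isLittleO_pow_mul_of_isBigO_pow nhdsWithin_le_nhds hE (b := 1) (k := k) (by omega)
  have hE₂ :=
    isLittleO_pow_mul_of_isBigO_pow nhdsWithin_le_nhds hE' (b := 2) (k := k) (by omega)
  refine ((hW.const_mul_left 2).add ((hE₁.const_mul_left 2).add hE₂)).congr' ?_
    EventuallyEq.rfl
  filter_upwards [self_mem_nhdsWithin] with r hr
  rw [deriv_sq_mul_sq_deriv_add_sub_sq (hVdiff r hr) (hVdiff' r hr) (hEdiff r hr)]
  push_cast
  ring
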